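/- Let E be a finite directed graph without sinks and let u ∈ U_E. Then: (1) if u F_E u* ⊆ F_E, then λ_u(F_E) ⊆ F_E; and (2) if λ_u(F_E) = F_E, then u F_E u* ⊆ F_E. -/

import Mathlib

/-- A finite directed graph. -/
structure FinDirGraph where
  V : Type
  E : Type
  [instFV : Fintype V]
  [instFE : Fintype E]
  [instDV : DecidableEq V]
  [instDE : DecidableEq E]
  r : E → V
  s : E → V

attribute [instance] FinDirGraph.instFV FinDirGraph.instFE FinDirGraph.instDV FinDirGraph.instDE

namespace FinDirGraph

variable (G : FinDirGraph)

/-- `G.IsPathFrom v l` : the list of edges `l` forms a path starting at vertex `v`. -/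
def IsPathFrom : G.V → List G.E → Prop
  | _, [] => True
  | v, e :: l => G.s e = v ∧ IsPathFrom (G.r e) l

/-- The terminal vertex of a list of edges starting at `v`. -/
def rangeFrom : G.V → List G.E → G.V
  | v, [] => v
  | _, e :: l => rangeFrom (G.r e) l

/-- A finite path in the graph `G`; vertices are the paths of length `0`. -/
structure Path where
  src : G.V
  edges : List G.E
  ok : G.IsPathFrom src edges

variable {G}

/-- The length of a path. -/
def Path.len (μ : G.Path) : ℕ := μ.edges.length

/-- The range (terminal vertex) of a path. -/
def Path.rng (μ : G.Path) : G.V := G.rangeFrom μ.src μ.edges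

variable (G)

/-- `G` has no sinks: every vertex emits at least one edge. -/
def NoSinks : Prop := ∀ v : G.V, ∃ e : G.E, G.s e = v

/-- `G` has no sources: every vertex receives at least one edge. -/
def NoSources : Prop := ∀ v : G.V, ∃ e : G.E, G.r e = v

/-- Every loop in `G` has an exit. -/
def EveryLoopHasExit : Prop :=
  ∀ μ : G.Path, μ.edges ≠ [] → μ.src = μ.rng →
    ∃ e ∈ μ.edges, ∃ f g : G.E, f ≠ g ∧ G.s f = G.s e ∧ G.s g = G.s e

variable (A : Type) [CStarAlgebra A] [PartialOrder A]

/-- A Cuntz–Krieger `G`-family in a unital C*-algebra `A`. -/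
structure CKFamily where
  P : G.V → A
  S : G.E → A
  proj_idem : ∀ v, P v * P v = P v
  proj_sa : ∀ v, star (P v) = P v
  orth : ∀ v w, v ≠ w → P v * P w = 0
  ck1 : ∀ e, star (S e) * S e = P (G.r e)
  ck1' : ∀ e f, e ≠ f → star (S e) * S f = 0
  ck2 : ∀ e, S e * star (S e) ≤ P (G.s e)
  ck3 : ∀ v : G.V, (∃ e, G.s e = v) →
    P v = ∑ e ∈ Finset.univ.filter (fun e => G.s e = v), S e * star (S e)

variable {G A}

/-- The partial isometry `S_μ` associated to a finite path, defined from the source. -/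
def CKFamily.sFrom (F : CKFamily G A) : G.V → List G.E → A
  | v, [] => F.P v
  | _, e :: l => F.S e * F.sFrom (G.r e) l

/-- `S_μ` for a path `μ`. -/
def CKFamily.sPath (F : CKFamily G A) (μ : G.Path) : A := F.sFrom μ.src μ.edges

/-- `P_μ = S_μ S_μ*` for a path `μ`. -/
def CKFamily.pPath (F : CKFamily G A) (μ : G.Path) : A :=
  F.sPath μ * star (F.sPath μ)

variable (G A) in
/-- `A`, together with the Cuntz–Krieger family `F`, is the graph C*-algebra `C*(G)`:
the family sums to one, generates `A` as a closed *-subalgebra, and is universal. -/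
structure IsGraphCStarAlgebra (F : CKFamily G A) : Prop where
  sum_one : ∑ v : G.V, F.P v = 1
  generates :
    (StarAlgebra.adjoin ℂ (Set.range F.P ∪ Set.range F.S)).topologicalClosure = ⊤
  universal : ∀ (C : Type) [CStarAlgebra C] [PartialOrder C] [StarOrderedRing C]
    (F' : CKFamily G C), (∑ v : G.V, F'.P v) = 1 →
      ∃! φ : A →⋆ₐ[ℂ] C, (∀ v, φ (F.P v) = F'.P v) ∧ (∀ e, φ (F.S e) = F'.S e)

/-- The diagonal subalgebra `D_E`: the closed *-subalgebra generated by the `P_μ`. -/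
def CKFamily.DE (F : CKFamily G A) : StarSubalgebra ℂ A :=
  (StarAlgebra.adjoin ℂ {a : A | ∃ μ : G.Path, a = F.pPath μ}).topologicalClosure

/-- `D_E^k`: the linear span of the `P_μ`, `μ ∈ E^k`. -/
noncomputable def CKFamily.DEk (F : CKFamily G A) (k : ℕ) : Submodule ℂ A :=
  Submodule.span ℂ {a : A | ∃ μ : G.Path, μ.len = k ∧ a = F.pPath μ}

/-- The core AF-subalgebra `F_E`: closed linear span of words `S_μ S_ν*` with `|μ| = |ν|`. -/
def CKFamily.FE (F : CKFamily G A) : Set A :=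
  closure ((Submodule.span ℂ
    {a : A | ∃ μ ν : G.Path, μ.len = ν.len ∧ a = F.sPath μ * star (F.sPath ν)}
      : Submodule ℂ A) : Set A)

/-- `F_E^k`: the linear span of words `S_μ S_ν*` with `|μ| = |ν| = k`. -/
noncomputable def CKFamily.FEk (F : CKFamily G A) (k : ℕ) : Submodule ℂ A :=
  Submodule.span ℂ
    {a : A | ∃ μ ν : G.Path, μ.len = k ∧ ν.len = k ∧ a = F.sPath μ * star (F.sPath ν)}

/-- `u ∈ U_E` : `u` is a unitary commuting with all vertex projections. -/
def CKFamily.IsUE (F : CKFamily G A) (u : A) : Prop :=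
  u ∈ unitary A ∧ ∀ v, u * F.P v = F.P v * u

/-- `lam = λ_u` : the endomorphism determined by the unitary `u ∈ U_E`. -/
def CKFamily.IsLambdaU (F : CKFamily G A) (u : A) (lam : A →⋆ₐ[ℂ] A) : Prop :=
  (∀ e, lam (F.S e) = u * F.S e) ∧ (∀ v, lam (F.P v) = F.P v)

/-- The shift `φ(x) = Σ_e S_e x S_e*`. -/
def CKFamily.shift (F : CKFamily G A) (x : A) : A :=
  ∑ e : G.E, F.S e * x * star (F.S e)

/-- `u_k = u φ(u) ⋯ φ^{k-1}(u)` (with `u_0 = 1`). -/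
def CKFamily.ukProd (F : CKFamily G A) (u : A) : ℕ → A
  | 0 => 1
  | m + 1 => F.ukProd u m * F.shift^[m] u

/-- An element is a finite sum of words `S_α S_β*`. -/
def CKFamily.IsSumOfWords (F : CKFamily G A) (a : A) : Prop :=
  ∃ (n : ℕ) (μ ν : Fin n → G.Path),
    a = ∑ i, F.sPath (μ i) * star (F.sPath (ν i))

/-- The group `S_E` of unitaries of the form `Σ S_α S_β*`. -/
def CKFamily.SE (F : CKFamily G A) : Set A :=
  {a : A | a ∈ unitary A ∧ F.IsSumOfWords a}

/-- The group `P_E^k` of unitaries of the form `Σ S_α S_β*`, `|α| = |β| = k`. -/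
def CKFamily.PEk (F : CKFamily G A) (k : ℕ) : Set A :=
  {a : A | a ∈ unitary A ∧ ∃ (n : ℕ) (μ ν : Fin n → G.Path),
    (∀ i, (μ i).len = k ∧ (ν i).len = k) ∧
    a = ∑ i, F.sPath (μ i) * star (F.sPath (ν i))}

/-- `P_E = ∪_k P_E^k`. -/
def CKFamily.PE (F : CKFamily G A) : Set A := ⋃ k : ℕ, F.PEk k

/-- `γ_z` on generators: `γ (S e) = z • S e`, `γ (P v) = P v`. -/
def CKFamily.IsGaugeHom (F : CKFamily G A) (z : ℂ) (ρ : A →⋆ₐ[ℂ] A) : Prop :=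
  (∀ e, ρ (F.S e) = z • F.S e) ∧ (∀ v, ρ (F.P v) = F.P v)

/-- `γ_z` as an automorphism, on generators. -/
def CKFamily.IsGaugeAut (F : CKFamily G A) (z : ℂ) (γ : A ≃⋆ₐ[ℂ] A) : Prop :=
  (∀ e, γ (F.S e) = z • F.S e) ∧ (∀ v, γ (F.P v) = F.P v)

/-- The automorphism `α` of `C*(E)` is induced by an automorphism of the graph `E`. -/
def CKFamily.IsGraphInduced (F : CKFamily G A) (α : A ≃⋆ₐ[ℂ] A) : Prop :=
  ∃ (φV : G.V ≃ G.V) (φE : G.E ≃ G.E),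
    (∀ e, G.s (φE e) = φV (G.s e)) ∧ (∀ e, G.r (φE e) = φV (G.r e)) ∧
    (∀ e, α (F.S e) = F.S (φE e)) ∧ (∀ v, α (F.P v) = F.P (φV v))

/-- Membership in the subgroup `𝔊_E` of `Aut (C*(E))` generated by the graph
automorphisms `Γ_E` together with the automorphisms `λ_u`, `u ∈ S_E ∩ U_E`. -/
inductive CKFamily.InGG (F : CKFamily G A) : (A ≃⋆ₐ[ℂ] A) → Prop
  | gamma (α : A ≃⋆ₐ[ℂ] A) : F.IsGraphInduced α → F.InGG α
  | lam (α : A ≃⋆ₐ[ℂ] A) (u : A) : u ∈ F.SE → F.IsUE u →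
      (∀ e, α (F.S e) = u * F.S e) → (∀ v, α (F.P v) = F.P v) → F.InGG α
  | one : F.InGG (StarAlgEquiv.refl ℂ A)
  | mul (α β : A ≃⋆ₐ[ℂ] A) : F.InGG α → F.InGG β → F.InGG (α.trans β)
  | inv (α : A ≃⋆ₐ[ℂ] A) : F.InGG α → F.InGG α.symm

/-- Membership in the subgroup `𝔊ℜ_E` of `Aut (C*(E))` generated by the graph
automorphisms `Γ_E` together with the automorphisms `λ_u`, `u ∈ P_E ∩ U_E`. -/
inductive CKFamily.InGGR (F : CKFamily G A) : (A ≃⋆ₐ[ℂ] A) → Prop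
  | gamma (α : A ≃⋆ₐ[ℂ] A) : F.IsGraphInduced α → F.InGGR α
  | lam (α : A ≃⋆ₐ[ℂ] A) (u : A) : u ∈ F.PE → F.IsUE u →
      (∀ e, α (F.S e) = u * F.S e) → (∀ v, α (F.P v) = F.P v) → F.InGGR α
  | one : F.InGGR (StarAlgEquiv.refl ℂ A)
  | mul (α β : A ≃⋆ₐ[ℂ] A) : F.InGGR α → F.InGGR β → F.InGGR (α.trans β)
  | inv (α : A ≃⋆ₐ[ℂ] A) : F.InGGR α → F.InGGR α.symm


/-- The map `a^u_{e,f}(x) = S_e* u* x u S_f`. -/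
def CKFamily.amap (F : CKFamily G A) (u : A) (e f : G.E) (x : A) : A :=
  star (F.S e) * (star u * x * u) * F.S f

/-- Composition of the maps `a^u_{e,f}` along a list of pairs of edges. -/
def CKFamily.acomp (F : CKFamily G A) (u : A) : List (G.E × G.E) → A → A
  | [], x => x
  | p :: t, x => F.amap u p.1 p.2 (F.acomp u t x)

/-- The spaces `Ξ_r`: `Ξ_0 = F_E^{k-1}`, `Ξ_r = λ_u(H)* Ξ_{r-1} λ_u(H)`. -/
noncomputable def CKFamily.Xi (F : CKFamily G A) (u : A) (k : ℕ) : ℕ → Submodule ℂ A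
  | 0 => F.FEk (k - 1)
  | r + 1 => Submodule.span ℂ
      {a : A | ∃ x ∈ F.Xi u k r, ∃ e f : G.E, a = star (u * F.S e) * x * (u * F.S f)}

/-- The spaces `Ξ_r^D`: `Ξ_0^D = D_E^{k-1}`, `Ξ_r^D = λ_u(H)* Ξ_{r-1}^D λ_u(H)`. -/
noncomputable def CKFamily.XiD (F : CKFamily G A) (u : A) (k : ℕ) : ℕ → Submodule ℂ A
  | 0 => F.DEk (k - 1)
  | r + 1 => Submodule.span ℂ
      {a : A | ∃ x ∈ F.XiD u k r, ∃ e f : G.E, a = star (u * F.S e) * x * (u * F.S f)}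

end FinDirGraph

/-!
Both statements are checked on the spanning words `S_μ S_ν*` (`|μ| = |ν|`) of `F_E` and extended
by linearity and continuity. Since `λ_u(S_a w S_b*) = u S_a λ_u(w) S_b* u*` and `F_E` is invariant
under `x ↦ S_a x S_b*`, induction on `|μ|` gives (1). For (2), the absence of sinks gives
`1 = Σ_e S_e S_e*`, so `u x u* = Σ_{e,f} u S_e (S_e* x S_f) S_f* u*`; writing `S_e* x S_f = λ_u(z)`
with `z ∈ F_E` turns each summand into `λ_u(S_e z S_f*) ∈ λ_u(F_E) = F_E`.
-/

namespace FinDirGraph.CKFamily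

open scoped CStarAlgebra

variable {G : FinDirGraph} {A : Type} [CStarAlgebra A] [PartialOrder A] (F : CKFamily G A)

theorem S_mul_P_r (e : G.E) : F.S e * F.P (G.r e) = F.S e := by
  have hP := F.proj_idem (G.r e)
  have h : star (F.S e * F.P (G.r e) - F.S e) * (F.S e * F.P (G.r e) - F.S e) = 0 :=
    calc _ = F.P (G.r e) * (star (F.S e) * F.S e) * F.P (G.r e)
          - F.P (G.r e) * (star (F.S e) * F.S e)
          - star (F.S e) * F.S e * F.P (G.r e) + star (F.S e) * F.S e := by
            rw [star_sub, star_mul, F.proj_sa]; noncomm_ring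
      _ = 0 := by simp only [F.ck1, hP]; abel
  exact sub_eq_zero.mp ((CStarRing.star_mul_self_eq_zero_iff _).mp h)

theorem star_S_mul_S (e f : G.E) :
    star (F.S e) * F.S f = if e = f then F.P (G.r e) else 0 := by
  split_ifs with h
  · exact h ▸ F.ck1 e
  · exact F.ck1' e f h

theorem P_s_mul_S (e : G.E) : F.P (G.s e) * F.S e = F.S e := by
  rw [F.ck3 (G.s e) ⟨e, rfl⟩, Finset.sum_mul, Finset.sum_eq_single_of_mem e (by simp)]
  · rw [mul_assoc, F.ck1, F.S_mul_P_r]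
  · intro f _ hfe
    rw [mul_assoc, F.ck1' f e hfe, mul_zero]

theorem P_mul_S_of_ne {v : G.V} {e : G.E} (h : v ≠ G.s e) : F.P v * F.S e = 0 := by
  rw [← F.P_s_mul_S e, ← mul_assoc, F.orth v (G.s e) h, zero_mul]

theorem P_mul_sFrom {v : G.V} {l : List G.E} (h : G.IsPathFrom v l) :
    F.P v * F.sFrom v l = F.sFrom v l := by
  cases l with
  | nil => exact F.proj_idem v
  | cons e t =>
    change F.P v * (F.S e * F.sFrom (G.r e) t) = F.S e * F.sFrom (G.r e) t
    rw [← mul_assoc, ← h.1, F.P_s_mul_S]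

theorem S_mul_sFrom (e : G.E) {v : G.V} {l : List G.E} (h : G.IsPathFrom v l) :
    F.S e * F.sFrom v l = if G.r e = v then F.sFrom (G.s e) (e :: l) else 0 := by
  rw [← F.P_mul_sFrom h, ← mul_assoc]
  split_ifs with hev
  · subst hev
    rw [F.S_mul_P_r]
    rfl
  · have hSP : F.S e * F.P v = 0 := by
      rw [← F.S_mul_P_r e, mul_assoc, F.orth (G.r e) v hev, mul_zero]
    rw [hSP, zero_mul]

noncomputable def coreSubmodule : Submodule ℂ A :=
  (Submodule.span ℂ
    {a : A | ∃ μ ν : G.Path, μ.len = ν.len ∧ a = F.sPath μ * star (F.sPath ν)}).topologicalClosure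

theorem coe_coreSubmodule : (F.coreSubmodule : Set A) = F.FE :=
  Submodule.topologicalClosure_coe _

theorem isClosed_coreSubmodule : IsClosed (F.coreSubmodule : Set A) :=
  Submodule.isClosed_topologicalClosure _

theorem sPath_mul_star_mem_coreSubmodule {μ ν : G.Path} (h : μ.len = ν.len) :
    F.sPath μ * star (F.sPath ν) ∈ F.coreSubmodule :=
  Submodule.le_topologicalClosure _ (Submodule.subset_span ⟨μ, ν, h, rfl⟩)

theorem sFrom_mul_star_mem_coreSubmodule {v w : G.V} {l m : List G.E} (hl : G.IsPathFrom v l)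
    (hm : G.IsPathFrom w m) (h : l.length = m.length) :
    F.sFrom v l * star (F.sFrom w m) ∈ F.coreSubmodule :=
  F.sPath_mul_star_mem_coreSubmodule (μ := ⟨v, l, hl⟩) (ν := ⟨w, m, hm⟩) h

theorem P_mem_coreSubmodule (v : G.V) : F.P v ∈ F.coreSubmodule := by
  simpa only [sFrom, F.proj_sa, F.proj_idem] using
    F.sFrom_mul_star_mem_coreSubmodule (v := v) (w := v) (l := []) (m := []) trivial trivial rfl

theorem map_mem_coreSubmodule (T : A →ₗ[ℂ] A) (hT : Continuous T)
    (h : ∀ μ ν : G.Path, μ.len = ν.len → T (F.sPath μ * star (F.sPath ν)) ∈ F.coreSubmodule)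
    {x : A} (hx : x ∈ F.coreSubmodule) : T x ∈ F.coreSubmodule := by
  refine Submodule.topologicalClosure_minimal (t := F.coreSubmodule.comap T) _ ?_
    (F.isClosed_coreSubmodule.preimage hT) hx
  rw [Submodule.span_le]
  rintro _ ⟨μ, ν, hlen, rfl⟩
  exact h μ ν hlen

theorem mul_mul_mem_coreSubmodule (a b : A)
    (h : ∀ μ ν : G.Path, μ.len = ν.len → a * (F.sPath μ * star (F.sPath ν)) * b ∈ F.coreSubmodule)
    {x : A} (hx : x ∈ F.coreSubmodule) : a * x * b ∈ F.coreSubmodule :=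
  F.map_mem_coreSubmodule (LinearMap.mulLeftRight ℂ (a, b))
    ((continuous_const.mul continuous_id).mul continuous_const) h hx

theorem star_S_mul_mul_S_mem_coreSubmodule (e f : G.E) {x : A} (hx : x ∈ F.coreSubmodule) :
    star (F.S e) * x * F.S f ∈ F.coreSubmodule := by
  refine F.mul_mul_mem_coreSubmodule _ _ ?_ hx
  rintro ⟨v, l, hl⟩ ⟨w, m, hm⟩ hlen
  simp only [sPath, Path.len] at hlen ⊢
  match l, m, hlen with
  | [], [], _ =>
    change star (F.S e) * (F.P v * star (F.P w)) * F.S f ∈ _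
    rw [F.proj_sa]
    rcases eq_or_ne v w with rfl | hvw
    · rw [F.proj_idem, mul_assoc]
      rcases eq_or_ne v (G.s f) with rfl | hvf
      · rw [F.P_s_mul_S, F.star_S_mul_S]
        split_ifs
        exacts [F.P_mem_coreSubmodule _, zero_mem _]
      · rw [F.P_mul_S_of_ne hvf, mul_zero]
        exact zero_mem _
    · rw [F.orth v w hvw, mul_zero, zero_mul]
      exact zero_mem _
  | a :: l, b :: m, hlen =>
    change star (F.S e) * (F.S a * F.sFrom (G.r a) l * star (F.S b * F.sFrom (G.r b) m)) *
      F.S f ∈ _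
    have hassoc : star (F.S e) * (F.S a * F.sFrom (G.r a) l *
          star (F.S b * F.sFrom (G.r b) m)) * F.S f
        = star (F.S e) * F.S a * (F.sFrom (G.r a) l * star (F.sFrom (G.r b) m)) *
          (star (F.S b) * F.S f) := by
      rw [star_mul]; noncomm_ring
    rw [hassoc, F.star_S_mul_S, F.star_S_mul_S]
    split_ifs with hea hbf
    · subst hea hbf
      have hmP : star (F.sFrom (G.r b) m) * F.P (G.r b) = star (F.sFrom (G.r b) m) := by
        rw [← F.proj_sa, ← star_mul, F.P_mul_sFrom hm.2]
      rw [← mul_assoc, F.P_mul_sFrom hl.2, mul_assoc, hmP]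
      exact F.sFrom_mul_star_mem_coreSubmodule hl.2 hm.2 (Nat.succ_injective hlen)
    all_goals simp only [zero_mul, mul_zero, zero_mem]

theorem S_mul_mul_star_S_mem_coreSubmodule (e f : G.E) {x : A} (hx : x ∈ F.coreSubmodule) :
    F.S e * x * star (F.S f) ∈ F.coreSubmodule := by
  refine F.mul_mul_mem_coreSubmodule _ _ ?_ hx
  rintro ⟨v, l, hl⟩ ⟨w, m, hm⟩ hlen
  simp only [sPath, Path.len] at hlen ⊢
  rw [← mul_assoc, mul_assoc, ← star_mul, F.S_mul_sFrom e hl, F.S_mul_sFrom f hm]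
  split_ifs with hev hfw
  · subst hev hfw
    exact F.sFrom_mul_star_mem_coreSubmodule (l := e :: l) (m := f :: m) ⟨rfl, hl⟩ ⟨rfl, hm⟩
      (by simp [hlen])
  all_goals simp only [zero_mul, star_zero, mul_zero, zero_mem]

theorem map_mem_coreSubmodule_of_conj_mem {u : A} {lam : A →⋆ₐ[ℂ] A} (hlam : F.IsLambdaU u lam)
    (hconj : ∀ x ∈ F.coreSubmodule, u * x * star u ∈ F.coreSubmodule)
    {x : A} (hx : x ∈ F.coreSubmodule) : lam x ∈ F.coreSubmodule := by
  refine F.map_mem_coreSubmodule lam.toAlgHom.toLinearMap (map_continuous lam) ?_ hx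
  rintro ⟨v, l, hl⟩ ⟨w, m, hm⟩ hlen
  simp only [sPath, Path.len] at hlen ⊢
  change lam _ ∈ _
  induction l generalizing v w m with
  | nil =>
    match m, hlen with
    | [], _ =>
      change lam (F.P v * star (F.P w)) ∈ _
      rw [map_mul, map_star, hlam.2, hlam.2]
      exact F.sFrom_mul_star_mem_coreSubmodule (l := []) (m := []) hl hm rfl
  | cons a l ih =>
    match m, hlen with
    | b :: m, hlen =>
      change lam (F.S a * F.sFrom (G.r a) l * star (F.S b * F.sFrom (G.r b) m)) ∈ _
      have hlam_word : lam (F.S a * F.sFrom (G.r a) l * star (F.S b * F.sFrom (G.r b) m))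
          = u * (F.S a * lam (F.sFrom (G.r a) l * star (F.sFrom (G.r b) m)) * star (F.S b)) *
            star u := by
        simp only [map_mul, map_star, hlam.1, star_mul]; noncomm_ring
      rw [hlam_word]
      exact hconj _ (F.S_mul_mul_star_S_mem_coreSubmodule a b
        (ih _ hl.2 _ _ hm.2 (Nat.succ_injective hlen)))

theorem sum_S_mul_star_S (hns : G.NoSinks) (hone : ∑ v, F.P v = 1) :
    ∑ e, F.S e * star (F.S e) = 1 := by
  rw [← hone, ← Finset.sum_fiberwise Finset.univ G.s]
  exact Finset.sum_congr rfl fun v _ => (F.ck3 v (hns v)).symm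

theorem conj_mem_coreSubmodule_of_image_eq (hns : G.NoSinks) (hone : ∑ v, F.P v = 1) {u : A}
    {lam : A →⋆ₐ[ℂ] A} (hlam : F.IsLambdaU u lam)
    (himg : lam '' F.coreSubmodule = F.coreSubmodule) {x : A} (hx : x ∈ F.coreSubmodule) :
    u * x * star u ∈ F.coreSubmodule := by
  have hsplit : u * x * star u
      = ∑ e, ∑ f, u * F.S e * (star (F.S e) * x * F.S f) * star (u * F.S f) :=
    calc u * x * star u
        = u * ((∑ e, F.S e * star (F.S e)) * x * ∑ f, F.S f * star (F.S f)) * star u := by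
          rw [F.sum_S_mul_star_S hns hone, one_mul, mul_one]
      _ = _ := by
          simp only [Finset.sum_mul, Finset.mul_sum, star_mul, mul_assoc]
          exact Finset.sum_comm
  rw [hsplit]
  refine Submodule.sum_mem _ fun e _ => Submodule.sum_mem _ fun f _ => ?_
  obtain ⟨z, hz, hzx⟩ : star (F.S e) * x * F.S f ∈ lam '' F.coreSubmodule := by
    rw [himg]
    exact F.star_S_mul_mul_S_mem_coreSubmodule e f hx
  have hmem : lam (F.S e * z * star (F.S f)) ∈ lam '' F.coreSubmodule :=
    Set.mem_image_of_mem _ (F.S_mul_mul_star_S_mem_coreSubmodule e f hz)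
  rwa [himg, map_mul, map_mul, map_star, hlam.1, hlam.1, hzx] at hmem

end FinDirGraph.CKFamily

open FinDirGraph in
theorem stmt_6_general (G : FinDirGraph) (hns : G.NoSinks)
    (A : Type) [CStarAlgebra A] [PartialOrder A]
    (F : CKFamily G A) (hGA : IsGraphCStarAlgebra G A F)
    (u : A) (lam : A →⋆ₐ[ℂ] A) (hlam : F.IsLambdaU u lam) :
    ((∀ x ∈ F.FE, u * x * star u ∈ F.FE) → ∀ x ∈ F.FE, lam x ∈ F.FE) ∧
    (⇑lam '' F.FE = F.FE → ∀ x ∈ F.FE, u * x * star u ∈ F.FE) := by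
  simp only [← F.coe_coreSubmodule, SetLike.mem_coe]
  exact ⟨fun hconj _ => F.map_mem_coreSubmodule_of_conj_mem hlam hconj,
    fun himg _ => F.conj_mem_coreSubmodule_of_image_eq hns hGA.sum_one hlam himg⟩

open FinDirGraph in
/-- Proposition 4.1 (normalFautos). -/
theorem stmt_6 (G : FinDirGraph) (hns : G.NoSinks)
    (A : Type) [CStarAlgebra A] [PartialOrder A] [StarOrderedRing A]
    (F : CKFamily G A) (hGA : IsGraphCStarAlgebra G A F)
    (u : A) (hu : F.IsUE u) (lam : A →⋆ₐ[ℂ] A) (hlam : F.IsLambdaU u lam) :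
    ((∀ x ∈ F.FE, u * x * star u ∈ F.FE) → ∀ x ∈ F.FE, lam x ∈ F.FE) ∧
    (⇑lam '' F.FE = F.FE → ∀ x ∈ F.FE, u * x * star u ∈ F.FE) :=
  stmt_6_general G hns A F hGA u lam hlam
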